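/- arXiv:1406.4792 — 3 statements merged into one kernel-verified Lean document; each statement's English description precedes it below -/
import Mathlib

section
/- Let P be a stochastic matrix on a finite set E satisfying the Döblin-type condition: there exist a state j̄ ∈ E, an integer t ≥ 1, and δ₀ ∈ (0,1] such that p^{(t)}_{i j̄} ≥ δ₀ for all i ∈ E, where p^{(t)} are the t-step transition probabilities. Then for any stationary distribution q and any states i, j and any integer n ≥ t, |p^{(n)}_{ij} - q_j| ≤ (1 - δ₀)^{⌊n/t⌋ - 1}. -/
open Finset

private lemma stmt5_pownn {E : Type*} [Fintype E] [DecidableEq E] (P : Matrix E E ℝ)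
    (hpos : ∀ i j, 0 ≤ P i j) : ∀ n i j, 0 ≤ (P ^ n) i j := by
  intro n
  induction n with
  | zero =>
    intro i j
    rw [pow_zero]
    by_cases h : i = j <;> simp [Matrix.one_apply, h]
  | succ n ih =>
    intro i j
    rw [pow_succ, Matrix.mul_apply]
    exact Finset.sum_nonneg fun k _ => mul_nonneg (ih i k) (hpos k j)

private lemma stmt5_powrow {E : Type*} [Fintype E] [DecidableEq E] (P : Matrix E E ℝ)
    (hrow : ∀ i, ∑ j, P i j = 1) : ∀ n i, ∑ j, (P ^ n) i j = 1 := by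
  intro n
  induction n with
  | zero => intro i; simp [Matrix.one_apply]
  | succ n ih =>
    intro i
    simp only [pow_succ, Matrix.mul_apply]
    rw [Finset.sum_comm]
    calc ∑ k, ∑ j, (P ^ n) i k * P k j = ∑ k, (P ^ n) i k * ∑ j, P k j := by
          simp [Finset.mul_sum]
      _ = ∑ k, (P ^ n) i k := by simp [hrow]
      _ = 1 := ih i

private lemma stmt5_statpow {E : Type*} [Fintype E] [DecidableEq E] (P : Matrix E E ℝ)
    (q : E → ℝ) (hstat : ∀ j, ∑ i, q i * P i j = q j) (hq1 : ∑ j, q j = 1) :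
    ∀ n j, ∑ i, q i * (P ^ n) i j = q j := by
  intro n
  induction n with
  | zero =>
    intro j
    simp [Matrix.one_apply]
  | succ n ih =>
    intro j
    simp only [pow_succ, Matrix.mul_apply]
    calc ∑ i, q i * ∑ k, (P ^ n) i k * P k j
        = ∑ k, (∑ i, q i * (P ^ n) i k) * P k j := by
          simp only [Finset.mul_sum]
          rw [Finset.sum_comm]
          congr 1; ext k
          rw [Finset.sum_mul]
          congr 1; ext i; ring
      _ = ∑ k, q k * P k j := by simp [ih]
      _ = q j := hstat j

private lemma stmt5_contract {E : Type*} [Fintype E] [DecidableEq E]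
    (P : Matrix E E ℝ) (hpos : ∀ i j, 0 ≤ P i j) (hrow : ∀ i, ∑ j, P i j = 1)
    (jbar : E) (t : ℕ) (δ₀ : ℝ)
    (hdob : ∀ i, δ₀ ≤ (P ^ t) i jbar)
    (hne : (Finset.univ : Finset E).Nonempty) (n : ℕ) (j : E) :
    univ.sup' hne (fun i => (P ^ (t + n)) i j) - univ.inf' hne (fun i => (P ^ (t + n)) i j)
      ≤ (1 - δ₀) *
        (univ.sup' hne (fun i => (P ^ n) i j) - univ.inf' hne (fun i => (P ^ n) i j)) := by
  have hrowt : ∀ a, ∑ k, (P ^ t) a k = 1 := stmt5_powrow P hrow t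
  set M := univ.sup' hne (fun i => (P ^ n) i j) with hM
  set m := univ.inf' hne (fun i => (P ^ n) i j) with hm
  have hmM : m ≤ M := by
    obtain ⟨e, _⟩ := hne
    exact le_trans (Finset.inf'_le _ (Finset.mem_univ e)) (Finset.le_sup' (fun i => (P ^ n) i j) (Finset.mem_univ e))
  have key : ∀ i i' : E, (P ^ (t + n)) i j - (P ^ (t + n)) i' j ≤ (1 - δ₀) * (M - m) := by
    intro i i'
    have hcnn : ∀ k, 0 ≤ min ((P ^ t) i k) ((P ^ t) i' k) := fun k =>
      le_min (stmt5_pownn P hpos t i k) (stmt5_pownn P hpos t i' k)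
    set S := ∑ k, min ((P ^ t) i k) ((P ^ t) i' k) with hS
    have hSδ : δ₀ ≤ S := le_trans (le_min (hdob i) (hdob i'))
      (Finset.single_le_sum (fun k _ => hcnn k) (Finset.mem_univ jbar))
    have expand : ∀ a : E, (P ^ (t + n)) a j = ∑ k, (P ^ t) a k * (P ^ n) k j := by
      intro a; rw [pow_add, Matrix.mul_apply]
    have hsplit : ∀ a : E, ∑ k, (P ^ t) a k * (P ^ n) k j
        = ∑ k, ((P ^ t) a k - min ((P ^ t) i k) ((P ^ t) i' k)) * (P ^ n) k j
          + ∑ k, min ((P ^ t) i k) ((P ^ t) i' k) * (P ^ n) k j := by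
      intro a
      rw [← Finset.sum_add_distrib]
      congr 1; ext k; ring
    have hA : ∑ k, ((P ^ t) i k - min ((P ^ t) i k) ((P ^ t) i' k)) * (P ^ n) k j
        ≤ (1 - S) * M := by
      calc ∑ k, ((P ^ t) i k - min ((P ^ t) i k) ((P ^ t) i' k)) * (P ^ n) k j
          ≤ ∑ k, ((P ^ t) i k - min ((P ^ t) i k) ((P ^ t) i' k)) * M := by
            apply Finset.sum_le_sum
            intro k _
            exact mul_le_mul_of_nonneg_left (Finset.le_sup' (fun i => (P ^ n) i j) (Finset.mem_univ k))
              (by simp [min_le_left])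
        _ = (1 - S) * M := by
            rw [← Finset.sum_mul, Finset.sum_sub_distrib, hrowt i, ← hS]
    have hB : (1 - S) * m
        ≤ ∑ k, ((P ^ t) i' k - min ((P ^ t) i k) ((P ^ t) i' k)) * (P ^ n) k j := by
      calc (1 - S) * m
          = ∑ k, ((P ^ t) i' k - min ((P ^ t) i k) ((P ^ t) i' k)) * m := by
            rw [← Finset.sum_mul, Finset.sum_sub_distrib, hrowt i', ← hS]
        _ ≤ ∑ k, ((P ^ t) i' k - min ((P ^ t) i k) ((P ^ t) i' k)) * (P ^ n) k j := by
            apply Finset.sum_le_sum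
            intro k _
            exact mul_le_mul_of_nonneg_left (Finset.inf'_le _ (Finset.mem_univ k))
              (by simp [min_le_right])
    have hexp : (P ^ (t + n)) i j - (P ^ (t + n)) i' j
        = ∑ k, ((P ^ t) i k - min ((P ^ t) i k) ((P ^ t) i' k)) * (P ^ n) k j
          - ∑ k, ((P ^ t) i' k - min ((P ^ t) i k) ((P ^ t) i' k)) * (P ^ n) k j := by
      rw [expand i, expand i', hsplit i, hsplit i']; ring
    rw [hexp]
    nlinarith [hA, hB, hSδ, hmM]
  obtain ⟨i0, _, hi0⟩ := Finset.exists_mem_eq_sup' hne (fun i => (P ^ (t + n)) i j)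
  obtain ⟨i1, _, hi1⟩ := Finset.exists_mem_eq_inf' hne (fun i => (P ^ (t + n)) i j)
  rw [hi0, hi1]
  exact key i0 i1


/-- Under the Döblin-type condition `(P^t) i j̄ ≥ δ₀` for all `i`,
any stationary distribution `q` satisfies
`|p^{(n)}_{ij} - q_j| ≤ (1 - δ₀)^(⌊n/t⌋ - 1)` for all `n ≥ t`. -/
theorem stmt5 {E : Type*} [Fintype E] [DecidableEq E]
    (P : Matrix E E ℝ) (hpos : ∀ i j, 0 ≤ P i j) (hrow : ∀ i, ∑ j, P i j = 1)
    (jbar : E) (t : ℕ) (ht : 1 ≤ t) (δ₀ : ℝ) (hδ₀ : 0 < δ₀) (hδ₁ : δ₀ ≤ 1)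
    (hdob : ∀ i, δ₀ ≤ (P ^ t) i jbar)
    (q : E → ℝ) (hq0 : ∀ j, 0 ≤ q j) (hq1 : ∑ j, q j = 1)
    (hstat : ∀ j, ∑ i, q i * P i j = q j) :
    ∀ n, t ≤ n → ∀ i j, |(P ^ n) i j - q j| ≤ (1 - δ₀) ^ (n / t - 1) := by
  intro n hn i j
  have hne : (univ : Finset E).Nonempty := ⟨i, mem_univ i⟩
  have hnn := stmt5_pownn P hpos
  have hrs := stmt5_powrow P hrow
  set D : ℕ → ℝ :=
    fun s => univ.sup' hne (fun a => (P ^ s) a j) - univ.inf' hne (fun a => (P ^ s) a j) with hD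
  have hcontr : ∀ s, D (t + s) ≤ (1 - δ₀) * D s := fun s =>
    stmt5_contract P hpos hrow jbar t δ₀ hdob hne s j
  have hD1 : ∀ s, D s ≤ 1 := by
    intro s
    have h1 : univ.sup' hne (fun a => (P ^ s) a j) ≤ 1 := by
      obtain ⟨b, _, hb⟩ := Finset.exists_mem_eq_sup' hne (fun a => (P ^ s) a j)
      rw [hb]
      calc (P ^ s) b j ≤ ∑ k, (P ^ s) b k :=
            Finset.single_le_sum (fun k _ => hnn s b k) (mem_univ j)
        _ = 1 := hrs s b
    have h2 : (0:ℝ) ≤ univ.inf' hne (fun a => (P ^ s) a j) := by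
      obtain ⟨b, _, hb⟩ := Finset.exists_mem_eq_inf' hne (fun a => (P ^ s) a j)
      rw [hb]; exact hnn s b j
    simp only [hD]; linarith
  have hδ' : (0:ℝ) ≤ 1 - δ₀ := by linarith
  have hiter : ∀ s u, D (u + t * s) ≤ (1 - δ₀) ^ s * D u := by
    intro s
    induction s with
    | zero => intro u; simp
    | succ s ih =>
      intro u
      have he : u + t * (s + 1) = t + (u + t * s) := by ring
      rw [he]
      calc D (t + (u + t * s)) ≤ (1 - δ₀) * D (u + t * s) := hcontr _
        _ ≤ (1 - δ₀) * ((1 - δ₀) ^ s * D u) := mul_le_mul_of_nonneg_left (ih u) hδ'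
        _ = (1 - δ₀) ^ (s + 1) * D u := by ring
  -- q j lies between inf and sup
  have hqs := stmt5_statpow P q hstat hq1 n j
  have hql : univ.inf' hne (fun a => (P ^ n) a j) ≤ q j := by
    rw [← hqs]
    calc univ.inf' hne (fun a => (P ^ n) a j)
        = ∑ a, q a * univ.inf' hne (fun a => (P ^ n) a j) := by
          rw [← Finset.sum_mul, hq1, one_mul]
      _ ≤ ∑ a, q a * (P ^ n) a j := Finset.sum_le_sum fun a _ =>
          mul_le_mul_of_nonneg_left (Finset.inf'_le _ (mem_univ a)) (hq0 a)
  have hqu : q j ≤ univ.sup' hne (fun a => (P ^ n) a j) := by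
    rw [← hqs]
    calc ∑ a, q a * (P ^ n) a j
        ≤ ∑ a, q a * univ.sup' hne (fun a => (P ^ n) a j) := Finset.sum_le_sum fun a _ =>
          mul_le_mul_of_nonneg_left (Finset.le_sup' (fun a => (P ^ n) a j) (mem_univ a)) (hq0 a)
      _ = univ.sup' hne (fun a => (P ^ n) a j) := by rw [← Finset.sum_mul, hq1, one_mul]
  have hil : univ.inf' hne (fun a => (P ^ n) a j) ≤ (P ^ n) i j := Finset.inf'_le _ (mem_univ i)
  have hiu : (P ^ n) i j ≤ univ.sup' hne (fun a => (P ^ n) a j) := Finset.le_sup' (fun a => (P ^ n) a j) (mem_univ i)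
  have habs : |(P ^ n) i j - q j| ≤ D n := by
    rw [abs_sub_le_iff]
    simp only [hD]
    constructor <;> linarith
  have ht0 : 0 < t := ht
  have hk1 : 1 ≤ n / t := (Nat.one_le_div_iff ht0).2 hn
  have hle : t * (n / t - 1) ≤ n := by
    calc t * (n / t - 1) ≤ t * (n / t) := Nat.mul_le_mul_left t (Nat.sub_le _ 1)
      _ = n / t * t := Nat.mul_comm _ _
      _ ≤ n := Nat.div_mul_le_self n t
  have hn' : n = (n - t * (n / t - 1)) + t * (n / t - 1) := (Nat.sub_add_cancel hle).symm
  calc |(P ^ n) i j - q j| ≤ D n := habs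
    _ = D ((n - t * (n / t - 1)) + t * (n / t - 1)) := by rw [← hn']
    _ ≤ (1 - δ₀) ^ (n / t - 1) * D (n - t * (n / t - 1)) := hiter _ _
    _ ≤ (1 - δ₀) ^ (n / t - 1) * 1 :=
        mul_le_mul_of_nonneg_left (hD1 _) (pow_nonneg hδ' _)
    _ = (1 - δ₀) ^ (n / t - 1) := mul_one _
end

section
/- Let E = {1,...,n} with a strongly connected arrow structure (from each i at least one arrow starts; between any two states there are arrow-paths in both directions), and let q^ε be the unique stationary distribution of the Markov chain with p^ε_{ij} = exp(-α_i/ε) for arrows i → j and p^ε_{ii} = 1 - d(i) exp(-α_i/ε), where α_i > 0 and d(i) is the out-degree of i. Then lim_{ε ↓ 0} ε · ln q^ε_j = α_j - max_{i ∈ E} α_i for each j ∈ E. -/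
/-- For a strongly connected arrow structure on `E` with
`p^ε_{ij} = exp(-α_i/ε)` along arrows and `p^ε_{ii} = 1 - d(i) exp(-α_i/ε)`,
the stationary distribution `q^ε` satisfies
`lim_{ε ↓ 0} ε ln q^ε_j = α_j - max_{i ∈ E} α_i`. -/
theorem stmt6 {E : Type*} [Fintype E] [DecidableEq E] [Nonempty E]
    (arrow : E → E → Prop) [DecidableRel arrow]
    (hne : ∀ i j, arrow i j → j ≠ i)
    (hout : ∀ i, ∃ j, arrow i j)
    (hconn : ∀ i j, Relation.ReflTransGen arrow i j)
    (α : E → ℝ) (hα : ∀ i, 0 < α i)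
    (d : E → ℕ) (hd : ∀ i, d i = (Finset.univ.filter (fun j => arrow i j)).card)
    (P : ℝ → E → E → ℝ)
    (hP : ∀ ε i j, P ε i j = if i = j then 1 - (d i : ℝ) * Real.exp (-α i / ε)
      else if arrow i j then Real.exp (-α i / ε) else 0)
    (ε₀ : ℝ) (hε₀ : 0 < ε₀)
    (hsmall : ∀ ε ∈ Set.Ioo (0:ℝ) ε₀, ∀ i, (d i : ℝ) * Real.exp (-α i / ε) < 1)
    (q : ℝ → E → ℝ)
    (hq : ∀ ε ∈ Set.Ioo (0:ℝ) ε₀, (∀ j, 0 ≤ q ε j) ∧ (∑ j, q ε j = 1) ∧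
      (∀ j, ∑ i, q ε i * P ε i j = q ε j)) :
    ∀ j, Filter.Tendsto (fun ε => ε * Real.log (q ε j))
      (nhdsWithin 0 (Set.Ioo (0:ℝ) ε₀))
      (nhds (α j - Finset.univ.sup' Finset.univ_nonempty α)) := by
  classical
  intro j
  set M : ℝ := Finset.univ.sup' Finset.univ_nonempty α with hMdef
  set f : ℝ → E → ℝ := fun ε i => q ε i * Real.exp (-α i / ε) with hfdef
  set D : ℝ := Finset.univ.sup' Finset.univ_nonempty (fun i => (d i : ℝ)) with hDdef
  have hD1 : (1:ℝ) ≤ D := by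
    obtain ⟨i⟩ := ‹Nonempty E›
    have h1 : 1 ≤ d i := by
      rw [hd]
      obtain ⟨j', hj'⟩ := hout i
      exact Finset.card_pos.mpr ⟨j', Finset.mem_filter.mpr ⟨Finset.mem_univ _, hj'⟩⟩
    calc (1:ℝ) ≤ (d i : ℝ) := by exact_mod_cast h1
      _ ≤ D := Finset.le_sup' (fun i => (d i : ℝ)) (Finset.mem_univ i)
  have hfnn : ∀ ε ∈ Set.Ioo (0:ℝ) ε₀, ∀ i, 0 ≤ f ε i := fun ε hε i =>
    mul_nonneg ((hq ε hε).1 i) (Real.exp_nonneg _)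
  -- balance equation
  have hbal : ∀ ε ∈ Set.Ioo (0:ℝ) ε₀, ∀ k,
      ∑ i ∈ Finset.univ.filter (fun i => arrow i k), f ε i
        = q ε k * ((d k : ℝ) * Real.exp (-α k / ε)) := by
    intro ε hε k
    have h := (hq ε hε).2.2 k
    rw [← Finset.add_sum_erase Finset.univ (fun i => q ε i * P ε i k)
      (Finset.mem_univ k)] at h
    have h2 : ∑ i ∈ Finset.univ.erase k, q ε i * P ε i k
        = ∑ i ∈ Finset.univ.filter (fun i => arrow i k), f ε i := by
      have hsets : Finset.univ.filter (fun i => arrow i k)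
          = (Finset.univ.erase k).filter (fun i => arrow i k) := by
        ext i
        simp only [Finset.mem_filter, Finset.mem_erase, Finset.mem_univ, true_and]
        exact ⟨fun h => ⟨⟨(hne i k h).symm, trivial⟩, h⟩, fun h => h.2⟩
      rw [hsets, Finset.sum_filter]
      apply Finset.sum_congr rfl
      intro i hi
      have hik : i ≠ k := Finset.ne_of_mem_erase hi
      rw [hP, if_neg hik]
      by_cases ha : arrow i k
      · rw [if_pos ha, if_pos ha, hfdef]
      · rw [if_neg ha, if_neg ha, mul_zero]
    rw [h2, hP, if_pos rfl] at h
    linear_combination h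
  -- one-step comparison
  have hstep : ∀ ε ∈ Set.Ioo (0:ℝ) ε₀, ∀ b k, arrow b k → f ε b ≤ D * f ε k := by
    intro ε hε b k hbk
    have hmem : b ∈ Finset.univ.filter (fun i => arrow i k) :=
      Finset.mem_filter.mpr ⟨Finset.mem_univ _, hbk⟩
    have h1 : f ε b ≤ ∑ i ∈ Finset.univ.filter (fun i => arrow i k), f ε i :=
      Finset.single_le_sum (fun i _ => hfnn ε hε i) hmem
    rw [hbal ε hε k] at h1
    have h2 : q ε k * ((d k : ℝ) * Real.exp (-α k / ε)) = (d k : ℝ) * f ε k := by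
      rw [hfdef]; ring
    rw [h2] at h1
    refine h1.trans (mul_le_mul_of_nonneg_right ?_ (hfnn ε hε k))
    exact Finset.le_sup' (fun i => (d i : ℝ)) (Finset.mem_univ k)
  -- path comparison
  have hpath : ∀ i k, ∃ c : ℝ, 0 < c ∧ ∀ ε ∈ Set.Ioo (0:ℝ) ε₀, f ε i ≤ c * f ε k := by
    intro i k
    induction hconn i k with
    | refl => exact ⟨1, one_pos, fun ε hε => by rw [one_mul]⟩
    | tail hab hbk ih =>
      obtain ⟨c, hc, hle⟩ := ih
      refine ⟨c * D, mul_pos hc (lt_of_lt_of_le one_pos hD1), fun ε hε => ?_⟩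
      calc f ε i ≤ c * f ε _ := hle ε hε
        _ ≤ c * (D * f ε _) := mul_le_mul_of_nonneg_left (hstep ε hε _ _ hbk) hc.le
        _ = c * D * f ε _ := by ring
  choose c hcpos hcle using hpath
  obtain ⟨i₀, -, hi₀⟩ := Finset.exists_mem_eq_sup' Finset.univ_nonempty α
  set S : ℝ := ∑ i, c i j with hSdef
  have hSpos : 0 < S := Finset.sum_pos (fun i _ => hcpos i j) Finset.univ_nonempty
  -- q is related to f by q ε i = f ε i * exp (α i / ε)
  have hqf : ∀ ε, ε ≠ 0 → ∀ i, q ε i = f ε i * Real.exp (α i / ε) := by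
    intro ε hε i
    rw [hfdef]
    simp only []
    rw [mul_assoc, ← Real.exp_add]
    have : -α i / ε + α i / ε = 0 := by ring
    rw [this, Real.exp_zero, mul_one]
  -- lower bound
  have hlow : ∀ ε ∈ Set.Ioo (0:ℝ) ε₀, Real.exp ((α j - M) / ε) / S ≤ q ε j := by
    intro ε hε
    have hε0 : (0:ℝ) < ε := hε.1
    have key : ∀ i, q ε i ≤ c i j * (q ε j * Real.exp ((M - α j) / ε)) := by
      intro i
      have h1 : f ε i ≤ c i j * f ε j := hcle i j ε hε
      have h2 : q ε i ≤ c i j * f ε j * Real.exp (α i / ε) := by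
        rw [hqf ε hε0.ne' i]
        exact mul_le_mul_of_nonneg_right h1 (Real.exp_nonneg _)
      have h3 : c i j * f ε j * Real.exp (α i / ε)
          = c i j * (q ε j * Real.exp ((α i - α j) / ε)) := by
        rw [hfdef]
        simp only []
        rw [mul_assoc, mul_assoc, ← Real.exp_add]
        congr 2
        ring
      rw [h3] at h2
      refine h2.trans (mul_le_mul_of_nonneg_left (mul_le_mul_of_nonneg_left ?_
        ((hq ε hε).1 j)) (hcpos i j).le)
      apply Real.exp_le_exp.mpr
      have : α i ≤ M := Finset.le_sup' α (Finset.mem_univ i)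
      exact div_le_div_of_nonneg_right (by linarith) hε0.le
    have hsum : (1:ℝ) ≤ S * (q ε j * Real.exp ((M - α j) / ε)) := by
      have := (hq ε hε).2.1
      calc (1:ℝ) = ∑ i, q ε i := this.symm
        _ ≤ ∑ i, c i j * (q ε j * Real.exp ((M - α j) / ε)) :=
          Finset.sum_le_sum (fun i _ => key i)
        _ = S * (q ε j * Real.exp ((M - α j) / ε)) := by
          rw [hSdef, ← Finset.sum_mul]
    have hexp : Real.exp ((α j - M) / ε) * Real.exp ((M - α j) / ε) = 1 := by
      rw [← Real.exp_add]
      have : (α j - M) / ε + (M - α j) / ε = 0 := by ring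
      rw [this, Real.exp_zero]
    rw [div_le_iff₀ hSpos]
    calc Real.exp ((α j - M) / ε)
        = Real.exp ((α j - M) / ε) * 1 := (mul_one _).symm
      _ ≤ Real.exp ((α j - M) / ε) * (S * (q ε j * Real.exp ((M - α j) / ε))) :=
          mul_le_mul_of_nonneg_left hsum (Real.exp_nonneg _)
      _ = (Real.exp ((α j - M) / ε) * Real.exp ((M - α j) / ε)) * (S * q ε j) := by ring
      _ = q ε j * S := by rw [hexp]; ring
  -- upper bound
  have hup : ∀ ε ∈ Set.Ioo (0:ℝ) ε₀, q ε j ≤ c j i₀ * Real.exp ((α j - M) / ε) := by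
    intro ε hε
    have hε0 : (0:ℝ) < ε := hε.1
    have h1 : f ε j ≤ c j i₀ * f ε i₀ := hcle j i₀ ε hε
    have h2 : q ε j ≤ c j i₀ * f ε i₀ * Real.exp (α j / ε) := by
      rw [hqf ε hε0.ne' j]
      exact mul_le_mul_of_nonneg_right h1 (Real.exp_nonneg _)
    have h3 : c j i₀ * f ε i₀ * Real.exp (α j / ε)
        = c j i₀ * q ε i₀ * Real.exp ((α j - α i₀) / ε) := by
      rw [hfdef]
      simp only []
      rw [mul_assoc, mul_assoc, mul_assoc, ← Real.exp_add]
      congr 3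
      ring
    have hqi₀ : q ε i₀ ≤ 1 := by
      have := (hq ε hε).2.1
      calc q ε i₀ ≤ ∑ i, q ε i :=
        Finset.single_le_sum (fun i _ => (hq ε hε).1 i) (Finset.mem_univ i₀)
        _ = 1 := this
    rw [h3, ← hi₀] at h2
    refine h2.trans ?_
    have : c j i₀ * q ε i₀ ≤ c j i₀ * 1 := mul_le_mul_of_nonneg_left hqi₀ (hcpos j i₀).le
    rw [mul_one] at this
    exact mul_le_mul_of_nonneg_right this (Real.exp_nonneg _)
  -- log bounds
  have hqpos : ∀ ε ∈ Set.Ioo (0:ℝ) ε₀, 0 < q ε j := by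
    intro ε hε
    exact lt_of_lt_of_le (div_pos (Real.exp_pos _) hSpos) (hlow ε hε)
  have hlogL : ∀ ε ∈ Set.Ioo (0:ℝ) ε₀,
      (α j - M) - ε * Real.log S ≤ ε * Real.log (q ε j) := by
    intro ε hε
    have hε0 : (0:ℝ) < ε := hε.1
    have h1 : Real.log (Real.exp ((α j - M) / ε) / S) ≤ Real.log (q ε j) :=
      Real.log_le_log (div_pos (Real.exp_pos _) hSpos) (hlow ε hε)
    rw [Real.log_div (Real.exp_ne_zero _) hSpos.ne', Real.log_exp] at h1
    have h2 : ε * ((α j - M) / ε - Real.log S) ≤ ε * Real.log (q ε j) :=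
      mul_le_mul_of_nonneg_left h1 hε0.le
    calc (α j - M) - ε * Real.log S = ε * ((α j - M) / ε - Real.log S) := by
          field_simp
      _ ≤ ε * Real.log (q ε j) := h2
  have hlogU : ∀ ε ∈ Set.Ioo (0:ℝ) ε₀,
      ε * Real.log (q ε j) ≤ (α j - M) + ε * Real.log (c j i₀) := by
    intro ε hε
    have hε0 : (0:ℝ) < ε := hε.1
    have h1 : Real.log (q ε j) ≤ Real.log (c j i₀ * Real.exp ((α j - M) / ε)) :=
      Real.log_le_log (hqpos ε hε) (hup ε hε)
    rw [Real.log_mul (hcpos j i₀).ne' (Real.exp_ne_zero _), Real.log_exp] at h1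
    have h2 : ε * Real.log (q ε j) ≤ ε * (Real.log (c j i₀) + (α j - M) / ε) :=
      mul_le_mul_of_nonneg_left h1 hε0.le
    calc ε * Real.log (q ε j) ≤ ε * (Real.log (c j i₀) + (α j - M) / ε) := h2
      _ = (α j - M) + ε * Real.log (c j i₀) := by field_simp; ring
  -- squeeze
  have hL : Filter.Tendsto (fun ε : ℝ => (α j - M) - ε * Real.log S)
      (nhdsWithin 0 (Set.Ioo (0:ℝ) ε₀)) (nhds (α j - M)) := by
    have : Filter.Tendsto (fun ε : ℝ => (α j - M) - ε * Real.log S)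
        (nhds 0) (nhds ((α j - M) - 0 * Real.log S)) := by
      exact (continuous_const.sub (continuous_id.mul continuous_const)).tendsto 0
    simpa using this.mono_left nhdsWithin_le_nhds
  have hU : Filter.Tendsto (fun ε : ℝ => (α j - M) + ε * Real.log (c j i₀))
      (nhdsWithin 0 (Set.Ioo (0:ℝ) ε₀)) (nhds (α j - M)) := by
    have : Filter.Tendsto (fun ε : ℝ => (α j - M) + ε * Real.log (c j i₀))
        (nhds 0) (nhds ((α j - M) + 0 * Real.log (c j i₀))) := by
      exact (continuous_const.add (continuous_id.mul continuous_const)).tendsto 0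
    simpa using this.mono_left nhdsWithin_le_nhds
  refine tendsto_of_tendsto_of_tendsto_of_le_of_le' hL hU ?_ ?_
  · exact eventually_mem_nhdsWithin.mono (fun ε hε => hlogL ε hε)
  · exact eventually_mem_nhdsWithin.mono (fun ε hε => hlogU ε hε)
end

section
/- (Markov chain tree theorem / Freidlin–Wentzell formula for stationary distributions.) Let P be an irreducible stochastic matrix on a finite set E. For j ∈ E, let G_j be the set of j-graphs over E: sets g of directed edges such that exactly one edge starts at each i ≠ j, no edge starts at j, and g contains no cycle (equivalently, from every i ≠ j the unique path of edges in g leads to j). Define w(g) = ∏_{(m → n) ∈ g} p_{mn} and Q_j = ∑_{g ∈ G_j} w(g). Then the stationary distribution q of P satisfies q_j = Q_j / ∑_{k ∈ E} Q_k, provided ∑_k Q_k > 0. -/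
open Function Finset

section Helpers
set_option linter.unusedSectionVars false
variable {E : Type*} [Fintype E] [DecidableEq E]

private lemma reach_update (f : E → E) (x y : E) :
    ∀ (N : ℕ) (m : E), f^[N] m = x → ∃ n, (Function.update f x y)^[n] m = x := by
  intro N
  induction N with
  | zero => intro m hm; exact ⟨0, hm⟩
  | succ N ih =>
    intro m hm
    by_cases hmx : m = x
    · exact ⟨0, hmx⟩
    · rw [Function.iterate_succ_apply] at hm
      obtain ⟨n, hn⟩ := ih (f m) hm
      refine ⟨n + 1, ?_⟩
      rw [Function.iterate_succ_apply, Function.update_of_ne hmx]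
      exact hn

private lemma reach_update' (f : E → E) (x y : E) (N : ℕ) (m : E)
    (h : f^[N] m = x) : ∃ n, (Function.update f x y)^[n] m = y := by
  obtain ⟨n, hn⟩ := reach_update f x y N m h
  refine ⟨n + 1, ?_⟩
  rw [Function.iterate_succ_apply', hn, Function.update_self]

private lemma iterate_find_unique (h : E → E) (j : E)
    (H : ∃ n, h^[n + 1] j = j) :
    ∀ N, h^[N + 1] j = j → h^[N] j = h^[Nat.find H] j := by
  intro N
  induction N using Nat.strong_induction_on with
  | _ N ih =>
    intro hN
    have hle : Nat.find H ≤ N := Nat.find_min' H hN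
    rcases eq_or_lt_of_le hle with heq | hlt
    · rw [heq]
    · set p := Nat.find H + 1 with hp
      have hpj : h^[p] j = j := Nat.find_spec H
      have hpN : p ≤ N := hlt
      have h1 : h^[(N - p) + 1] j = j := by
        calc h^[(N-p)+1] j = h^[(N-p)+1] (h^[p] j) := by rw [hpj]
          _ = h^[(N-p)+1+p] j := (Function.iterate_add_apply h _ p j).symm
          _ = h^[N+1] j := by congr 1; omega
          _ = j := hN
      have h2 := ih (N - p) (by omega) h1
      calc h^[N] j = h^[(N-p)+p] j := by congr 1; omega
        _ = h^[N-p] (h^[p] j) := Function.iterate_add_apply h _ p j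
        _ = h^[N-p] j := by rw [hpj]
        _ = h^[Nat.find H] j := h2

open Classical in
private noncomputable def predOf (h : E → E) (j : E) : E :=
  if H : ∃ n, h^[n + 1] j = j then h^[Nat.find H] j else j

private lemma predOf_spec (h : E → E) (j : E) (hh : ∀ m, ∃ n, h^[n] m = j) :
    h (predOf h j) = j ∧ ∃ N, h^[N] j = predOf h j := by
  have H : ∃ n, h^[n + 1] j = j := by
    obtain ⟨n, hn⟩ := hh (h j)
    exact ⟨n, by rw [Function.iterate_succ_apply]; exact hn⟩
  rw [predOf, dif_pos H]
  constructor
  · exact (Function.iterate_succ_apply' h (Nat.find H) j).symm.trans (Nat.find_spec H)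
  · exact ⟨Nat.find H, rfl⟩

private lemma predOf_unique (h : E → E) (j x : E)
    (N : ℕ) (hN : h^[N] j = x) (hx : h x = j) : x = predOf h j := by
  have H : ∃ n, h^[n + 1] j = j := ⟨N, by rw [Function.iterate_succ_apply', hN]; exact hx⟩
  rw [predOf, dif_pos H, ← hN]
  exact iterate_find_unique h j H N (by rw [Function.iterate_succ_apply', hN]; exact hx)

end Helpers

section Stat
set_option linter.unusedSectionVars false
variable {E : Type*} [Fintype E] [DecidableEq E]

private lemma Q_stationary (P : Matrix E E ℝ) (hrow : ∀ i, ∑ j, P i j = 1)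
    (G : E → Finset (E → E))
    (hG : ∀ j (g : E → E), g ∈ G j ↔ (g j = j ∧ ∀ i, ∃ n, g^[n] i = j))
    (Q : E → ℝ)
    (hQ : ∀ j, Q j = ∑ g ∈ G j, ∏ i ∈ Finset.univ.erase j, P i (g i)) (j : E) :
    ∑ i, Q i * P i j = Q j := by
  classical
  set Hj : Finset (E → E) := univ.filter (fun h => ∀ m, ∃ n, h^[n] m = j) with hHj
  have memHj : ∀ h : E → E, h ∈ Hj ↔ ∀ m, ∃ n, h^[n] m = j := by
    intro h; simp [hHj]
  -- weight identity
  have wt : ∀ (g : E → E) (i k : E),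
      ∏ m, P m (Function.update g i k m) = P i k * ∏ m ∈ univ.erase i, P m (g m) := by
    intro g i k
    rw [← Finset.mul_prod_erase univ _ (Finset.mem_univ i), Function.update_self]
    congr 1
    refine Finset.prod_congr rfl fun m hm => ?_
    rw [Function.update_of_ne (Finset.mem_erase.mp hm).1]
  have key1 : ∑ i, Q i * P i j = ∑ h ∈ Hj, ∏ m, P m (h m) := by
    have e1 : ∑ i, Q i * P i j
        = ∑ p ∈ univ.sigma (fun i => G i), (∏ m ∈ univ.erase p.1, P m (p.2 m)) * P p.1 j := by
      rw [Finset.sum_sigma]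
      refine Finset.sum_congr rfl fun i _ => ?_
      rw [hQ, Finset.sum_mul]
    rw [e1]
    refine Finset.sum_nbij' (fun p => Function.update p.2 p.1 j)
      (fun h => ⟨predOf h j, Function.update h (predOf h j) (predOf h j)⟩)
      ?_ ?_ ?_ ?_ ?_
    · rintro ⟨i, g⟩ hp
      rw [Finset.mem_sigma] at hp
      obtain ⟨hgi, hgr⟩ := (hG i g).mp hp.2
      rw [memHj]
      intro m
      obtain ⟨N, hN⟩ := hgr m
      exact reach_update' g i j N m hN
    · intro h hh
      rw [memHj] at hh
      obtain ⟨hpred, N, hNi⟩ := predOf_spec h j hh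
      rw [Finset.mem_sigma]
      refine ⟨Finset.mem_univ _, ?_⟩
      rw [hG]
      refine ⟨Function.update_self _ _ _, fun m => ?_⟩
      obtain ⟨a, ha⟩ := hh m
      have : h^[N + a] m = predOf h j := by
        rw [Function.iterate_add_apply, ha, hNi]
      exact reach_update h (predOf h j) (predOf h j) (N + a) m this
    · rintro ⟨i, g⟩ hp
      rw [Finset.mem_sigma] at hp
      obtain ⟨hgi, hgr⟩ := (hG i g).mp hp.2
      have hhmem : ∀ m, ∃ n, (Function.update g i j)^[n] m = j := by
        intro m
        obtain ⟨N, hN⟩ := hgr m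
        exact reach_update' g i j N m hN
      obtain ⟨N', hN'⟩ := hgr j
      obtain ⟨N, hN⟩ := reach_update g i j N' j hN'
      have hpi : predOf (Function.update g i j) j = i :=
        (predOf_unique (Function.update g i j) j i N hN (Function.update_self _ _ _)).symm
      have hupdate : Function.update g i i = g := by
        funext m
        by_cases hm : m = i
        · subst hm; rw [Function.update_self, hgi]
        · rw [Function.update_of_ne hm]
      simp only [hpi, Function.update_idem, hupdate]
    · intro h hh
      rw [memHj] at hh
      obtain ⟨hpred, -⟩ := predOf_spec h j hh
      simp only [Function.update_idem]
      have := Function.update_eq_self (predOf h j) h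
      rw [hpred] at this
      exact this
    · rintro ⟨i, g⟩ hp
      rw [wt, mul_comm]
  have e2 : Q j = ∑ p ∈ (G j).sigma (fun _ => (univ : Finset E)),
      (∏ m ∈ univ.erase j, P m (p.1 m)) * P j p.2 := by
    rw [Finset.sum_sigma, hQ]
    refine Finset.sum_congr rfl fun g _ => ?_
    dsimp only
    rw [← Finset.mul_sum, hrow, mul_one]
  have e3 : ∑ p ∈ (G j).sigma (fun _ => (univ : Finset E)),
      (∏ m ∈ univ.erase j, P m (p.1 m)) * P j p.2 = ∑ h ∈ Hj, ∏ m, P m (h m) := by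
    refine Finset.sum_nbij' (fun p => Function.update p.1 j p.2)
      (fun h => ⟨Function.update h j j, h j⟩) ?_ ?_ ?_ ?_ ?_
    · rintro ⟨g, k⟩ hp
      rw [Finset.mem_sigma] at hp
      obtain ⟨hgj, hgr⟩ := (hG j g).mp hp.1
      rw [memHj]
      intro m
      obtain ⟨N, hN⟩ := hgr m
      exact reach_update g j k N m hN
    · intro h hh
      rw [memHj] at hh
      rw [Finset.mem_sigma]
      refine ⟨?_, Finset.mem_univ _⟩
      rw [hG]
      refine ⟨Function.update_self _ _ _, fun m => ?_⟩
      obtain ⟨N, hN⟩ := hh m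
      exact reach_update h j j N m hN
    · rintro ⟨g, k⟩ hp
      rw [Finset.mem_sigma] at hp
      obtain ⟨hgj, hgr⟩ := (hG j g).mp hp.1
      have hupdate : Function.update g j j = g := by
        funext m
        by_cases hm : m = j
        · subst hm; rw [Function.update_self, hgj]
        · rw [Function.update_of_ne hm]
      simp only [Function.update_idem, Function.update_self, hupdate]
    · intro h hh
      simp only [Function.update_idem]
      exact Function.update_eq_self j h
    · rintro ⟨g, k⟩ hp
      rw [wt, mul_comm]
  rw [key1, e2]
  exact e3.symm

end Stat

section Uniq
set_option linter.unusedSectionVars false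
variable {E : Type*} [Fintype E] [DecidableEq E]

private lemma stationary_unique (P : Matrix E E ℝ) (hpos : ∀ i j, 0 ≤ P i j)
    (hirr : ∀ i j, Relation.ReflTransGen (fun a b => 0 < P a b) i j)
    (q r : E → ℝ) (hq0 : ∀ j, 0 ≤ q j) (hq1 : ∑ j, q j = 1)
    (hqs : ∀ j, ∑ i, q i * P i j = q j)
    (hr0 : ∀ j, 0 ≤ r j) (hr1 : ∑ j, r j = 1)
    (hrs : ∀ j, ∑ i, r i * P i j = r j) (j : E) : q j = r j := by
  have hne : (univ : Finset E).Nonempty := by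
    rcases (univ : Finset E).eq_empty_or_nonempty with h | h
    · rw [h, Finset.sum_empty] at hq1; norm_num at hq1
    · exact h
  have hrpos : ∀ k, 0 < r k := by
    have hex : ∃ i, 0 < r i := by
      by_contra hco
      push_neg at hco
      have h0 : ∑ k, r k = 0 :=
        le_antisymm (Finset.sum_nonpos fun k _ => hco k) (Finset.sum_nonneg fun k _ => hr0 k)
      rw [hr1] at h0; norm_num at h0
    obtain ⟨i, hi⟩ := hex
    intro k
    induction hirr i k with
    | refl => exact hi
    | tail hab hbc ih =>
      calc (0:ℝ) < r _ * P _ _ := mul_pos ih hbc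
        _ ≤ ∑ m, r m * P m _ :=
          Finset.single_le_sum (fun m _ => mul_nonneg (hr0 m) (hpos m _)) (Finset.mem_univ _)
        _ = r _ := hrs _
  set c := univ.inf' hne (fun k => q k / r k) with hc
  obtain ⟨j₀, -, hj₀⟩ := Finset.exists_mem_eq_inf' hne (fun k => q k / r k)
  rw [← hc] at hj₀
  have hcx : ∀ k, c * r k ≤ q k := by
    intro k
    have h1 : c ≤ q k / r k := Finset.inf'_le _ (Finset.mem_univ k)
    calc c * r k ≤ (q k / r k) * r k := mul_le_mul_of_nonneg_right h1 (hrpos k).le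
      _ = q k := div_mul_cancel₀ _ (hrpos k).ne'
  set x : E → ℝ := fun k => q k - c * r k with hxdef
  have hx0 : x j₀ = 0 := by
    simp only [hxdef]
    rw [hj₀, div_mul_cancel₀ _ (hrpos j₀).ne', sub_self]
  have hxnn : ∀ k, 0 ≤ x k := fun k => sub_nonneg.mpr (hcx k)
  have hxs : ∀ k, ∑ i, x i * P i k = x k := by
    intro k
    simp only [hxdef, sub_mul, Finset.sum_sub_distrib, mul_assoc, ← Finset.mul_sum]
    rw [hqs, hrs]
  have hzero : ∀ a, Relation.ReflTransGen (fun a b => 0 < P a b) a j₀ → x a = 0 := by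
    intro a hpath
    induction hpath using Relation.ReflTransGen.head_induction_on with
    | refl => exact hx0
    | @head b c' hbc' hpath' ih =>
      have hsum : ∑ m, x m * P m c' = 0 := (hxs _).trans ih
      have hterm := (Finset.sum_eq_zero_iff_of_nonneg
        (fun m _ => mul_nonneg (hxnn m) (hpos m _))).mp hsum b (Finset.mem_univ b)
      rcases mul_eq_zero.mp hterm with h | h
      · exact h
      · exact absurd h hbc'.ne'
  have hq_eq : ∀ k, q k = c * r k := by
    intro k
    have := hzero k (hirr k j₀)
    simp only [hxdef] at this
    linarith
  have hc1 : c = 1 := by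
    have hsum : ∑ k, q k = ∑ k, c * r k := Finset.sum_congr rfl fun k _ => hq_eq k
    rw [hq1, ← Finset.mul_sum, hr1, mul_one] at hsum
    exact hsum.symm
  rw [hq_eq j, hc1, one_mul]

end Uniq

/-- Markov chain tree theorem / Freidlin–Wentzell formula: for an
irreducible stochastic matrix `P`, the stationary distribution is
`q_j = Q_j / ∑_k Q_k`, where `Q_j` is the sum over `j`-graphs `g` of
`∏_{(m → n) ∈ g} p_{mn}`.  A `j`-graph is encoded as a function `g : E → E`
with `g j = j` whose iteration from any state reaches `j`; its edges are
`(i, g i)` for `i ≠ j`. -/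
theorem stmt7 {E : Type*} [Fintype E] [DecidableEq E]
    (P : Matrix E E ℝ) (hpos : ∀ i j, 0 ≤ P i j) (hrow : ∀ i, ∑ j, P i j = 1)
    (hirr : ∀ i j, Relation.ReflTransGen (fun a b => 0 < P a b) i j)
    (G : E → Finset (E → E))
    (hG : ∀ j (g : E → E), g ∈ G j ↔ (g j = j ∧ ∀ i, ∃ n, g^[n] i = j))
    (Q : E → ℝ)
    (hQ : ∀ j, Q j = ∑ g ∈ G j, ∏ i ∈ Finset.univ.erase j, P i (g i))
    (hQpos : 0 < ∑ k, Q k)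
    (q : E → ℝ) (hq0 : ∀ j, 0 ≤ q j) (hq1 : ∑ j, q j = 1)
    (hstat : ∀ j, ∑ i, q i * P i j = q j) :
    ∀ j, q j = Q j / ∑ k, Q k := by
  intro j
  set S : ℝ := ∑ k, Q k with hS
  have hQnn : ∀ k, 0 ≤ Q k := by
    intro k
    rw [hQ]
    exact Finset.sum_nonneg fun g _ => Finset.prod_nonneg fun m _ => hpos m (g m)
  have hr0 : ∀ k, 0 ≤ Q k / S := fun k => div_nonneg (hQnn k) hQpos.le
  have hr1 : ∑ k, Q k / S = 1 := by
    rw [← Finset.sum_div, ← hS, div_self hQpos.ne']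
  have hrs : ∀ k, ∑ i, (Q i / S) * P i k = Q k / S := by
    intro k
    simp only [div_mul_eq_mul_div]
    rw [← Finset.sum_div, Q_stationary P hrow G hG Q hQ k]
  exact stationary_unique P hpos hirr q (fun k => Q k / S) hq0 hq1 hstat hr0 hr1 hrs j
end
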